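/- arXiv:2005.01079 — 3 statements merged into one kernel-verified Lean document; each statement's English description precedes it below -/
import Mathlib

section
/- Let 0 < γ < 1 and let (α_k) be a nonincreasing sequence of positive reals with ∑ α_k² < ∞. Then for every K' ≥ 1, ∑_{k=1}^{K'} ∑_{r=1}^{k-1} α_{r-1} γ^{k-r} ∑_{l=1}^{k-1} α_{l-1} γ^{k-l} ≤ (1/(1-γ)²) ∑_{k=0}^{K'} α_k². -/
/-!
Write `C = 1/(1-γ)` for the sum of the geometric series. For each `k`, Cauchy–Schwarz with
weights `γ^(k-r)` gives `(∑ᵣ α_{r-1} γ^(k-r))² ≤ C ∑ᵣ α_{r-1}² γ^(k-r)`. Summing over `k` and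
exchanging the order of summation, each `α_{r-1}²` is multiplied by `∑ₖ γ^(k-r) ≤ C`, which
produces the second factor `C`.
-/

open Finset

lemma sum_pow_le_one_div_one_sub_of_injOn {ι : Type*} {γ : ℝ} (h0 : 0 ≤ γ) (h1 : γ < 1)
    {s : Finset ι} {e : ι → ℕ} (he : Set.InjOn e s) :
    ∑ i ∈ s, γ ^ e i ≤ 1 / (1 - γ) := by
  rw [← sum_image he, one_div, ← tsum_geometric_of_lt_one h0 h1]
  exact (summable_geometric_of_lt_one h0 h1).sum_le_tsum _ fun j _ => pow_nonneg h0 j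

lemma sq_sum_mul_pow_le_of_injOn {ι : Type*} {γ : ℝ} (h0 : 0 ≤ γ) (h1 : γ < 1)
    {s : Finset ι} {e : ι → ℕ} (he : Set.InjOn e s) (a : ι → ℝ) :
    (∑ i ∈ s, a i * γ ^ e i) ^ 2 ≤ 1 / (1 - γ) * ∑ i ∈ s, a i ^ 2 * γ ^ e i := by
  calc (∑ i ∈ s, a i * γ ^ e i) ^ 2
      ≤ (∑ i ∈ s, γ ^ e i) * ∑ i ∈ s, a i ^ 2 * γ ^ e i :=
        sum_sq_le_sum_mul_sum_of_sq_le_mul s (fun i _ => pow_nonneg h0 _)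
          (fun i _ => by positivity) fun i _ => (by ring : _ = _).le
    _ ≤ 1 / (1 - γ) * ∑ i ∈ s, a i ^ 2 * γ ^ e i := by
        gcongr
        exact sum_pow_le_one_div_one_sub_of_injOn h0 h1 he

lemma sum_Icc_sum_Icc_mul_pow_sub_le {γ : ℝ} (h0 : 0 ≤ γ) (h1 : γ < 1) {b : ℕ → ℝ}
    (hb : ∀ r, 0 ≤ b r) (K : ℕ) :
    ∑ k ∈ Icc 1 K, ∑ r ∈ Icc 1 (k - 1), b r * γ ^ (k - r) ≤
      1 / (1 - γ) * ∑ r ∈ Icc 1 K, b r := by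
  have hswap : ∑ k ∈ Icc 1 K, ∑ r ∈ Icc 1 (k - 1), b r * γ ^ (k - r) =
      ∑ r ∈ Icc 1 K, ∑ k ∈ Icc (r + 1) K, b r * γ ^ (k - r) :=
    sum_comm' fun k r => by simp only [mem_Icc]; omega
  rw [hswap, mul_sum]
  refine sum_le_sum fun r _ => ?_
  rw [← mul_sum, mul_comm]
  gcongr
  · exact hb r
  · exact sum_pow_le_one_div_one_sub_of_injOn h0 h1 fun i hi j hj hij => by
      simp only [coe_Icc, Set.mem_Icc] at hi hj
      omega

lemma sum_Icc_one_sub_one_le_sum_Icc_zero {f : ℕ → ℝ} (hf : ∀ j, 0 ≤ f j) (K : ℕ) :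
    ∑ r ∈ Icc 1 K, f (r - 1) ≤ ∑ j ∈ Icc 0 K, f j := by
  rw [← Ico_add_one_right_eq_Icc, sum_Ico_eq_sum_range]
  simp only [add_tsub_cancel_left]
  refine sum_le_sum_of_subset_of_nonneg (fun j hj => ?_) fun j _ _ => hf j
  simp only [mem_range, mem_Icc] at hj ⊢
  omega

theorem stmt_0_general (γ : ℝ) (hγ : 0 < γ) (hγ1 : γ < 1)
    (α : ℕ → ℝ) :
    ∀ K' : ℕ, 1 ≤ K' →
      ∑ k ∈ Finset.Icc 1 K',
          (∑ r ∈ Finset.Icc 1 (k - 1), α (r - 1) * γ ^ (k - r)) *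
            (∑ l ∈ Finset.Icc 1 (k - 1), α (l - 1) * γ ^ (k - l)) ≤
        (1 / (1 - γ) ^ 2) * ∑ k ∈ Finset.Icc 0 K', (α k) ^ 2 := by
  intro K' _
  calc ∑ k ∈ Icc 1 K', (∑ r ∈ Icc 1 (k - 1), α (r - 1) * γ ^ (k - r)) *
          (∑ l ∈ Icc 1 (k - 1), α (l - 1) * γ ^ (k - l))
      ≤ ∑ k ∈ Icc 1 K', 1 / (1 - γ) * ∑ r ∈ Icc 1 (k - 1), α (r - 1) ^ 2 * γ ^ (k - r) :=
        sum_le_sum fun k _ => by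
          rw [← sq]
          exact sq_sum_mul_pow_le_of_injOn hγ.le hγ1 (fun i hi j hj hij => by
            simp only [coe_Icc, Set.mem_Icc] at hi hj
            omega) _
    _ ≤ 1 / (1 - γ) * (1 / (1 - γ) * ∑ r ∈ Icc 1 K', α (r - 1) ^ 2) := by
        rw [← mul_sum]
        gcongr
        exact sum_Icc_sum_Icc_mul_pow_sub_le hγ.le hγ1 (fun r => sq_nonneg _) K'
    _ ≤ 1 / (1 - γ) * (1 / (1 - γ) * ∑ k ∈ Icc 0 K', α k ^ 2) := by
        gcongr
        exact sum_Icc_one_sub_one_le_sum_Icc_zero (fun j => sq_nonneg _) K'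
    _ = 1 / (1 - γ) ^ 2 * ∑ k ∈ Icc 0 K', α k ^ 2 := by
        rw [← mul_assoc, ← sq, div_pow, one_pow]

theorem stmt_0 (γ : ℝ) (hγ : 0 < γ) (hγ1 : γ < 1)
    (α : ℕ → ℝ) (hpos : ∀ k, 0 < α k) (hmono : ∀ k, α (k + 1) ≤ α k)
    (hsum : Summable fun k => (α k) ^ 2) :
    ∀ K' : ℕ, 1 ≤ K' →
      ∑ k ∈ Finset.Icc 1 K',
          (∑ r ∈ Finset.Icc 1 (k - 1), α (r - 1) * γ ^ (k - r)) *
            (∑ l ∈ Finset.Icc 1 (k - 1), α (l - 1) * γ ^ (k - l)) ≤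
        (1 / (1 - γ) ^ 2) * ∑ k ∈ Finset.Icc 0 K', (α k) ^ 2 :=
  stmt_0_general γ hγ hγ1 α
end

section
/- Let (V_k) be a sequence of nonnegative reals, (α_k) positive with ∑ α_k = ∞, and c, ε > 0. Suppose for all k ≥ K₀: whenever V_k > c we have V_{k+1} - V_k ≤ -ε α_k, and whenever V_k ≤ c we have V_{k+1} ≤ c + ε'. Then limsup_{k→∞} V_k ≤ c + ε', where ε' > 0 is fixed. -/
theorem stmt_12 (V α : ℕ → ℝ) (hV : ∀ k, 0 ≤ V k) (hα : ∀ k, 0 < α k)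
    (hdiv : ¬ Summable α) (c ε ε' : ℝ) (hc : 0 < c) (hε : 0 < ε) (hε' : 0 < ε')
    (K₀ : ℕ)
    (hdec : ∀ k, K₀ ≤ k → c < V k → V (k + 1) - V k ≤ -(ε * α k))
    (hstay : ∀ k, K₀ ≤ k → V k ≤ c → V (k + 1) ≤ c + ε') :
    Filter.limsup V Filter.atTop ≤ c + ε' := by
  have hsum : Filter.Tendsto (fun n => ∑ i ∈ Finset.range n, α i) Filter.atTop Filter.atTop := by
    rw [← not_summable_iff_tendsto_nat_atTop_of_nonneg (fun i => (hα i).le)]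
    exact hdiv
  -- shifted partial sums diverge
  have hshift : Filter.Tendsto (fun n => ∑ i ∈ Finset.range n, α (K₀ + i))
      Filter.atTop Filter.atTop := by
    have h1 : Filter.Tendsto (fun n => ∑ i ∈ Finset.range (K₀ + n), α i)
        Filter.atTop Filter.atTop :=
      hsum.comp (Filter.tendsto_atTop_mono (fun n => Nat.le_add_left n K₀) Filter.tendsto_id)
    have h2 : (fun n => ∑ i ∈ Finset.range n, α (K₀ + i)) =
        fun n => (∑ i ∈ Finset.range (K₀ + n), α i) - ∑ i ∈ Finset.range K₀, α i := by
      funext n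
      rw [Finset.sum_range_add]
      ring
    rw [h2]
    exact h1.atTop_add tendsto_const_nhds
  have hex : ∃ K, K₀ ≤ K ∧ V K ≤ c := by
    by_contra h
    push_neg at h
    have key : ∀ n, V (K₀ + n) ≤ V K₀ - ε * ∑ i ∈ Finset.range n, α (K₀ + i) := by
      intro n
      induction n with
      | zero => simp
      | succ n ih =>
        have h1 := hdec (K₀ + n) (Nat.le_add_right _ _) (h _ (Nat.le_add_right _ _))
        rw [Finset.sum_range_succ]
        have hn : K₀ + (n + 1) = K₀ + n + 1 := by ring
        rw [hn]
        have := mul_pos hε (hα (K₀ + n))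
        nlinarith
    obtain ⟨n, hn⟩ := (Filter.tendsto_atTop.mp (hshift.const_mul_atTop hε)
      (V K₀ + 1)).exists
    have := key n
    have := hV (K₀ + n)
    nlinarith
  obtain ⟨K, hK₀K, hVK⟩ := hex
  have inv : ∀ n, V (K + n) ≤ c + ε' := by
    intro n
    induction n with
    | zero => simpa using le_trans hVK (by linarith)
    | succ n ih =>
      have hle : K₀ ≤ K + n := le_trans hK₀K (Nat.le_add_right _ _)
      rcases le_or_gt (V (K + n)) c with hcase | hcase
      · have := hstay (K + n) hle hcase
        exact this
      · have := hdec (K + n) hle hcase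
        have := mul_pos hε (hα (K + n))
        have hn : K + (n + 1) = K + n + 1 := by ring
        rw [hn]
        linarith
  have hev : ∀ᶠ k in Filter.atTop, V k ≤ c + ε' := by
    filter_upwards [Filter.eventually_ge_atTop K] with k hk
    obtain ⟨n, rfl⟩ := Nat.exists_eq_add_of_le hk
    exact inv n
  refine Filter.limsup_le_of_le ?_ hev
  exact Filter.isCoboundedUnder_le_of_le Filter.atTop hV
end

section
/- Let M be a real 2n×2n matrix and suppose there exist Γ > 0 and γ ∈ (0,1) with ‖M^k - Π‖ ≤ Γγ^k for all k, where Π = [[ (1/n)𝟙𝟙ᵀ, (1/n)𝟙𝟙ᵀ ], [0, 0]]. Let Z(k+1) = M Z(k) - α_k g(k) with ‖g(k)‖ ≤ D and α_k → 0, α_k nonincreasing. Then for each block index i in the lower half (n+1 ≤ i ≤ 2n), the i-th block z_i(k) of Z(k) converges to 0, provided the i-th block row of Π is zero and the i-th block of g has norm ≤ α_k^{-1/4}·α_k ≤ α_k^{3/4}. -/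
/-!
Since the `i`-th block row of `Π` vanishes, the `i`-th row of `M ^ k` is bounded entrywise
by `Γ γ ^ k`. The free part `∑ⱼ (M ^ k)ᵢⱼ zⱼ(0)` therefore decays geometrically, and the
forcing part is bounded by a multiple of the convolution `∑ᵣ γ ^ (k - r) |α (r - 1)|` of a
summable sequence with a null sequence, which tends to `0` by Tannery's theorem.
-/

open Filter Finset Topology

lemma sum_Icc_one_sub_eq_sum_range {M : Type*} [AddCommMonoid M] (f : ℕ → ℕ → M)
    (k : ℕ) :
    ∑ r ∈ Icc 1 k, f (k - r) (r - 1) = ∑ m ∈ range k, f m (k - 1 - m) := by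
  refine sum_nbij' (k - ·) (k - ·) ?_ ?_ ?_ ?_ ?_ <;> intro r hr <;>
    simp only [mem_Icc, mem_range] at hr ⊢
  all_goals first | omega | congr 1; omega

lemma tendsto_sum_Icc_pow_mul_of_tendsto_zero {γ : ℝ} (hγ0 : 0 ≤ γ) (hγ1 : γ < 1)
    {a : ℕ → ℝ} (ha : Tendsto a atTop (𝓝 0)) :
    Tendsto (fun k => ∑ r ∈ Icc 1 k, γ ^ (k - r) * a (r - 1)) atTop (𝓝 0) := by
  obtain ⟨C, hC⟩ := ha.norm.bddAbove_range
  set f : ℕ → ℕ → ℝ := fun k m => if m < k then γ ^ m * a (k - 1 - m) else 0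
  have hsum : ∀ k, ∑ r ∈ Icc 1 k, γ ^ (k - r) * a (r - 1) = ∑' m, f k m := fun k => by
    rw [sum_Icc_one_sub_eq_sum_range (fun m j => γ ^ m * a j), tsum_eq_sum (s := range k)]
    · exact sum_congr rfl fun m hm => (if_pos (mem_range.mp hm)).symm
    · exact fun m hm => if_neg (by simpa using hm)
  simp_rw [hsum]
  rw [← tsum_zero]
  -- Tannery's theorem, with the summable majorant `C γ^m`.
  refine tendsto_tsum_of_dominated_convergence (bound := fun m => C * γ ^ m)
    ((summable_geometric_of_lt_one hγ0 hγ1).mul_left C) (fun m => ?_)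
    (Eventually.of_forall fun k m => ?_)
  · have hshift : Tendsto (fun k => k - 1 - m) atTop atTop :=
      (tendsto_sub_atTop_nat m).comp (tendsto_sub_atTop_nat 1)
    have := (ha.comp hshift).const_mul (γ ^ m)
    rw [mul_zero] at this
    refine this.congr' ?_
    filter_upwards [eventually_gt_atTop m] with k hk
    simp [f, hk]
  · simp only [f]
    split_ifs
    · rw [norm_mul, norm_pow, Real.norm_of_nonneg hγ0, mul_comm]
      exact mul_le_mul_of_nonneg_right (hC ⟨_, rfl⟩) (pow_nonneg hγ0 m)
    · simpa using mul_nonneg ((norm_nonneg (a 0)).trans (hC ⟨0, rfl⟩)) (pow_nonneg hγ0 m)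

lemma norm_sum_smul_le_card_mul {ι E : Type*} [Fintype ι] [SeminormedAddCommGroup E]
    [NormedSpace ℝ E] {c : ι → ℝ} {v : ι → E} {C D : ℝ} (hc : ∀ j, |c j| ≤ C)
    (hv : ∀ j, ‖v j‖ ≤ D) :
    ‖∑ j, c j • v j‖ ≤ Fintype.card ι * (C * D) := by
  calc ‖∑ j, c j • v j‖ ≤ ∑ j, ‖c j • v j‖ := norm_sum_le _ _
    _ ≤ ∑ _j : ι, C * D := sum_le_sum fun j _ => by
        rw [norm_smul, Real.norm_eq_abs]
        exact mul_le_mul (hc j) (hv j) (norm_nonneg _) ((abs_nonneg _).trans (hc j))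
    _ = Fintype.card ι * (C * D) := by simp

section GeometricRow

variable {ι E : Type*} [Fintype ι] [SeminormedAddCommGroup E] [NormedSpace ℝ E]
  {A : ℕ → ι → ℝ} {Γ γ : ℝ}

lemma tendsto_sum_smul_of_abs_le_geometric (hγ0 : 0 ≤ γ) (hγ1 : γ < 1)
    (hA : ∀ k j, |A k j| ≤ Γ * γ ^ k) (v : ι → E) :
    Tendsto (fun k => ∑ j, A k j • v j) atTop (𝓝 0) := by
  refine squeeze_zero_norm (fun k => norm_sum_smul_le_card_mul (hA k)
    fun j => single_le_sum (fun j _ => norm_nonneg (v j)) (mem_univ j)) ?_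
  simpa [mul_assoc] using ((tendsto_pow_atTop_nhds_zero_of_lt_one hγ0 hγ1).const_mul
    (Fintype.card ι * Γ)).mul_const (∑ j, ‖v j‖)

lemma tendsto_sum_Icc_smul_of_abs_le_geometric (hγ0 : 0 ≤ γ) (hγ1 : γ < 1)
    (hA : ∀ k j, |A k j| ≤ Γ * γ ^ k) {α : ℕ → ℝ} (hα : Tendsto α atTop (𝓝 0))
    {g : ℕ → ι → E} {D : ℝ} (hg : ∀ k j, ‖g k j‖ ≤ D) :
    Tendsto (fun k => ∑ r ∈ Icc 1 k, α (r - 1) • ∑ j, A (k - r) j • g (r - 1) j)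
      atTop (𝓝 0) := by
  have hbound : ∀ k,
      ‖∑ r ∈ Icc 1 k, α (r - 1) • ∑ j, A (k - r) j • g (r - 1) j‖ ≤
      Fintype.card ι * Γ * D * ∑ r ∈ Icc 1 k, γ ^ (k - r) * |α (r - 1)| := fun k =>
    calc _ ≤ ∑ r ∈ Icc 1 k, ‖α (r - 1) • ∑ j, A (k - r) j • g (r - 1) j‖ :=
          norm_sum_le _ _
      _ ≤ ∑ r ∈ Icc 1 k, |α (r - 1)| * (Fintype.card ι * (Γ * γ ^ (k - r) * D)) :=
        sum_le_sum fun r _ => by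
          rw [norm_smul, Real.norm_eq_abs]
          exact mul_le_mul_of_nonneg_left (norm_sum_smul_le_card_mul (hA _) (hg _))
            (abs_nonneg _)
      _ = _ := by rw [mul_sum]; exact sum_congr rfl fun r _ => by ring
  have hconv := tendsto_sum_Icc_pow_mul_of_tendsto_zero hγ0 hγ1 (a := fun r => |α r|)
    (by simpa using hα.abs)
  simpa using squeeze_zero_norm hbound (by simpa using hconv.const_mul (Fintype.card ι * Γ * D))

end GeometricRow

theorem stmt_14_general (n s : ℕ)
    (M Pi : Matrix (Fin (2 * n)) (Fin (2 * n)) ℝ)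
    (hPi : ∀ i j : Fin (2 * n), Pi i j = if (i : ℕ) < n then 1 / (n : ℝ) else 0)
    (Γ γ : ℝ) (hγ : 0 < γ) (hγ1 : γ < 1)
    (hM : ∀ (k : ℕ) (i j : Fin (2 * n)), |(M ^ k - Pi) i j| ≤ Γ * γ ^ k)
    (α : ℕ → ℝ)
    (hα0 : Filter.Tendsto α Filter.atTop (nhds 0))
    (g Z : ℕ → Fin (2 * n) → EuclideanSpace ℝ (Fin s))
    (D : ℝ) (hgD : ∀ k i, ‖g k i‖ ≤ D)
    (hZ : ∀ (k : ℕ) (i : Fin (2 * n)),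
      Z k i = (∑ j, (M ^ k) i j • Z 0 j) -
        ∑ r ∈ Finset.Icc 1 k, α (r - 1) • ∑ j, (M ^ (k - r)) i j • g (r - 1) j) :
    ∀ i : Fin (2 * n), n ≤ (i : ℕ) →
      Filter.Tendsto (fun k => Z k i) Filter.atTop (nhds 0) := by
  intro i hi
  have hrow : ∀ k j, |(M ^ k) i j| ≤ Γ * γ ^ k := fun k j => by
    simpa [hPi, not_lt.mpr hi] using hM k i j
  rw [funext (hZ · i), ← sub_zero (0 : EuclideanSpace ℝ (Fin s))]
  exact (tendsto_sum_smul_of_abs_le_geometric hγ.le hγ1 hrow (Z 0)).sub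
    (tendsto_sum_Icc_smul_of_abs_le_geometric hγ.le hγ1 hrow hα0 hgD)

theorem stmt_14 (n s : ℕ) (hn : 0 < n)
    (M Pi : Matrix (Fin (2 * n)) (Fin (2 * n)) ℝ)
    (hPi : ∀ i j : Fin (2 * n), Pi i j = if (i : ℕ) < n then 1 / (n : ℝ) else 0)
    (Γ γ : ℝ) (hΓ : 0 < Γ) (hγ : 0 < γ) (hγ1 : γ < 1)
    (hM : ∀ (k : ℕ) (i j : Fin (2 * n)), |(M ^ k - Pi) i j| ≤ Γ * γ ^ k)
    (α : ℕ → ℝ) (hαpos : ∀ k, 0 < α k) (hαmono : ∀ k, α (k + 1) ≤ α k)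
    (hα0 : Filter.Tendsto α Filter.atTop (nhds 0))
    (g Z : ℕ → Fin (2 * n) → EuclideanSpace ℝ (Fin s))
    (D : ℝ) (hD : 0 < D) (hgD : ∀ k i, ‖g k i‖ ≤ D)
    (hglow : ∀ (k : ℕ) (i : Fin (2 * n)), n ≤ (i : ℕ) → ‖g k i‖ ≤ (α k) ^ (-(1 / 4 : ℝ)))
    (hZ : ∀ (k : ℕ) (i : Fin (2 * n)),
      Z k i = (∑ j, (M ^ k) i j • Z 0 j) -
        ∑ r ∈ Finset.Icc 1 k, α (r - 1) • ∑ j, (M ^ (k - r)) i j • g (r - 1) j) :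
    ∀ i : Fin (2 * n), n ≤ (i : ℕ) →
      Filter.Tendsto (fun k => Z k i) Filter.atTop (nhds 0) :=
  stmt_14_general n s M Pi hPi Γ γ hγ hγ1 hM α hα0 g Z D hgD hZ
end
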